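/- Let Z be a countable type, π* and P probability mass functions on Z with π* absolutely continuous with respect to P, and let A ⊆ Z with δ = π*(A) > 0 and q = P(A) ∈ (0, 1). Then D_KL(π* ∥ P) ≥ δ log(δ/q) - log 2. -/

import Mathlib

open scoped Classical

/-- Pointwise linearization bound: `p log(p/P) ≥ p log t + p - P t`. -/
lemma pt_ineq {p P t : ℝ} (hp : 0 ≤ p) (hP : 0 ≤ P) (ht : 0 ≤ t)
    (habs : P = 0 → p = 0) (ht0 : t = 0 → p = 0) :
    p * Real.log t + p - P * t ≤ p * Real.log (p / P) := by
  rcases hp.eq_or_lt with h | h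
  · rw [← h]
    have : 0 ≤ P * t := mul_nonneg hP ht
    simp only [zero_mul, add_zero, zero_add, zero_sub]
    linarith
  · have hP' : 0 < P := lt_of_le_of_ne hP (fun h0 => by
      have := habs h0.symm; linarith)
    have ht' : 0 < t := lt_of_le_of_ne ht (fun h0 => by
      have := ht0 h0.symm; linarith)
    have hlog : 1 - (P * t) / p ≤ Real.log (p / (P * t)) := by
      have h2 := Real.log_le_sub_one_of_pos (show (0:ℝ) < (P * t) / p by positivity)
      have h3 : Real.log ((P * t) / p) = - Real.log (p / (P * t)) := by
        rw [← Real.log_inv]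
        congr 1
        field_simp
      linarith
    have hsplit : Real.log (p / P) = Real.log (p / (P * t)) + Real.log t := by
      rw [← Real.log_mul (by positivity) ht'.ne']
      congr 1
      field_simp
    have hmul := mul_le_mul_of_nonneg_left hlog h.le
    have hcancel : p * ((P * t) / p) = P * t := by field_simp
    rw [hsplit, mul_add]
    nlinarith
  
/-- `x log x ≥ -log 2` for `x ∈ [0,1]`. -/
lemma xlogx_ge {x : ℝ} (h0 : 0 ≤ x) (h1 : x ≤ 1) : -Real.log 2 ≤ x * Real.log x := by
  have hlog2 : (0.6931471803 : ℝ) < Real.log 2 := Real.log_two_gt_d9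
  rcases h0.eq_or_lt with h | h
  · rw [← h]; simp; linarith
  · set s := Real.sqrt x with hs
    have hs0 : 0 < s := Real.sqrt_pos.2 h
    have hsx : s * s = x := Real.mul_self_sqrt h0
    have hlx : Real.log x = 2 * Real.log s := by
      rw [← hsx, Real.log_mul hs0.ne' hs0.ne']; ring
    have hls : 1 - s⁻¹ ≤ Real.log s := by
      have h2 := Real.log_le_sub_one_of_pos (inv_pos.2 hs0)
      rw [Real.log_inv] at h2; linarith
    have hxs : x * s⁻¹ = s := by
      rw [← hsx, mul_assoc, mul_inv_cancel₀ hs0.ne', mul_one]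
    have hmul := mul_le_mul_of_nonneg_left hls (by positivity : (0:ℝ) ≤ 2 * x)
    nlinarith [sq_nonneg (s - 1/2)]


/-- The (extended-real-valued) Kullback–Leibler divergence `D_KL(p ∥ q)` between two
probability mass functions on a countable type: the sum `∑' z, p z * log (p z / q z)`
(natural logarithm, with the convention `0 · log 0 = 0`, automatic since `Real.log 0 = 0`)
when `p` is absolutely continuous w.r.t. `q` and the sum converges, and `⊤` otherwise. -/
noncomputable def klDiv {Z : Type*} (p q : Z → ℝ) : EReal :=
  if Summable (fun z => p z * Real.log (p z / q z)) ∧ (∀ z, q z = 0 → p z = 0) then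
    ((∑' z, p z * Real.log (p z / q z) : ℝ) : EReal)
  else ⊤

/-- **Quantitative divergence lower bound from decayed mass** (quantitative version of
Theorem 2.1, via the coarse-graining bound of Lemma 2.2 on the partition `{A, Aᶜ}`).
For pmfs `pstar = π*` and `P` on a countable type `Z` with `π*` absolutely continuous
w.r.t. `P`, and `A ⊆ Z` with `δ = π*(A) > 0` and `q = P(A) ∈ (0, 1)`,
`D_KL(π* ∥ P) ≥ δ log(δ/q) - log 2`. -/
theorem kl_ge_delta_log_sub_log_two {Z : Type*} [Countable Z]
    (pstar P : Z → ℝ)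
    (hpstar0 : ∀ z, 0 ≤ pstar z) (hpstar1 : ∑' z, pstar z = 1)
    (hP0 : ∀ z, 0 ≤ P z) (hP1 : ∑' z, P z = 1)
    (habs : ∀ z, P z = 0 → pstar z = 0)
    (A : Set Z) (δ q : ℝ)
    (hδ : δ = ∑' z : A, pstar z) (hq : q = ∑' z : A, P z)
    (hδ0 : 0 < δ) (hq0 : 0 < q) (hq1 : q < 1) :
    ((δ * Real.log (δ / q) - Real.log 2 : ℝ) : EReal) ≤ klDiv pstar P := by
  classical
  have hpsum : Summable pstar := by
    by_contra hc
    rw [tsum_eq_zero_of_not_summable hc] at hpstar1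
    norm_num at hpstar1
  have hPsum : Summable P := by
    by_contra hc
    rw [tsum_eq_zero_of_not_summable hc] at hP1
    norm_num at hP1
  unfold klDiv
  split_ifs with h
  · obtain ⟨hfsum, -⟩ := h
    rw [EReal.coe_le_coe_iff]
    set t₁ : ℝ := δ / q with ht₁
    set t₂ : ℝ := 1 - δ with ht₂
    set c₁ : ℝ := Real.log t₁ with hc₁
    set c₂ : ℝ := Real.log t₂ with hc₂
    -- δ ≤ 1
    have hδle : δ ≤ 1 := by
      rw [hδ, tsum_subtype]
      calc ∑' z, A.indicator pstar z ≤ ∑' z, pstar z :=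
            Summable.tsum_le_tsum (fun z => Set.indicator_le_self' (fun x _ => hpstar0 x) z)
              (hpsum.indicator A) hpsum
        _ = 1 := hpstar1
    -- mass of pstar off A is 1 - δ
    have hcompl : (∑' z : ↑A, pstar z) + ∑' z : ↑(Aᶜ), pstar z = 1 := by
      rw [← hpstar1]
      exact Summable.tsum_add_tsum_compl (hpsum.subtype A) (hpsum.subtype Aᶜ)
    have hoffA : ∀ z, z ∉ A → pstar z ≤ 1 - δ := by
      intro z hz
      have h1 : pstar z ≤ ∑' z : ↑(Aᶜ), pstar z :=
        Summable.le_tsum (hpsum.subtype Aᶜ) (⟨z, hz⟩ : ↑(Aᶜ)) (fun j _ => hpstar0 j)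
      linarith [hcompl, hδ]
    -- pointwise bound
    have key : ∀ z,
        (A.indicator (fun z => pstar z * (c₁ - c₂)) z + pstar z * c₂) + pstar z
          - (A.indicator (fun z => P z * (t₁ - t₂)) z + P z * t₂)
          ≤ pstar z * Real.log (pstar z / P z) := by
      intro z
      by_cases hz : z ∈ A
      · rw [Set.indicator_of_mem hz, Set.indicator_of_mem hz]
        have := pt_ineq (hpstar0 z) (hP0 z) (le_of_lt (by positivity : (0:ℝ) < t₁))
          (habs z) (fun h0 => absurd h0 (by positivity : (0:ℝ) < t₁).ne')
        rw [← hc₁] at this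
        nlinarith [this]
      · rw [Set.indicator_of_notMem hz, Set.indicator_of_notMem hz]
        have ht2 : 0 ≤ t₂ := by rw [ht₂]; linarith
        have ht20 : t₂ = 0 → pstar z = 0 := by
          intro h0
          have h1 := hoffA z hz
          rw [ht₂] at h0
          have := hpstar0 z
          linarith
        have := pt_ineq (hpstar0 z) (hP0 z) ht2 (habs z) ht20
        rw [← hc₂] at this
        linarith
    -- summability of the lower bound
    have hsum1 : Summable (A.indicator (fun z => pstar z * (c₁ - c₂))) :=
      (hpsum.mul_right _).indicator A
    have hsum2 : Summable (fun z => pstar z * c₂) := hpsum.mul_right _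
    have hsum3 : Summable (A.indicator (fun z => P z * (t₁ - t₂))) :=
      (hPsum.mul_right _).indicator A
    have hsum4 : Summable (fun z => P z * t₂) := hPsum.mul_right _
    have hgsum : Summable (fun z =>
        (A.indicator (fun z => pstar z * (c₁ - c₂)) z + pstar z * c₂) + pstar z
          - (A.indicator (fun z => P z * (t₁ - t₂)) z + P z * t₂)) :=
      (((hsum1.add hsum2).add hpsum).sub (hsum3.add hsum4))
    have hle := Summable.tsum_le_tsum key hgsum hfsum
    -- compute the tsum of the lower bound
    have e1 : ∑' z, A.indicator (fun z => pstar z * (c₁ - c₂)) z = δ * (c₁ - c₂) := by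
      rw [← tsum_subtype, tsum_mul_right, ← hδ]
    have e3 : ∑' z, A.indicator (fun z => P z * (t₁ - t₂)) z = q * (t₁ - t₂) := by
      rw [← tsum_subtype, tsum_mul_right, ← hq]
    have hg : ∑' z,
        ((A.indicator (fun z => pstar z * (c₁ - c₂)) z + pstar z * c₂) + pstar z
          - (A.indicator (fun z => P z * (t₁ - t₂)) z + P z * t₂))
        = (δ * (c₁ - c₂) + 1 * c₂) + 1 - (q * (t₁ - t₂) + 1 * t₂) := by
      rw [Summable.tsum_sub ((hsum1.add hsum2).add hpsum) (hsum3.add hsum4),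
        Summable.tsum_add (hsum1.add hsum2) hpsum, Summable.tsum_add hsum1 hsum2,
        Summable.tsum_add hsum3 hsum4, e1, e3, tsum_mul_right, tsum_mul_right,
        hpstar1, hP1]
    rw [hg] at hle
    have hqt : q * t₁ = δ := by rw [ht₁]; field_simp
    have hxlx : -Real.log 2 ≤ t₂ * c₂ := by
      rw [hc₂]
      exact xlogx_ge (by rw [ht₂]; linarith) (by rw [ht₂]; linarith)
    have hqt2 : 0 ≤ q * t₂ := mul_nonneg hq0.le (by rw [ht₂]; linarith)
    have ht2c2 : t₂ * c₂ = (1 - δ) * c₂ := by rw [ht₂]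
    nlinarith [hle]
  · exact le_top
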